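/- If G is a finite group with fewer than four subgroups not attaining the maximum Chermak–Delgado measure (δ_CD(G) < 4), then G is nilpotent. -/

import Mathlib

/-!
A Sylow subgroup lying in `CD(G)` is normal: for `H, K ∈ CD(G)` the Chermak–Delgado inequalities
force `|H ⊔ K| |H ⊓ K| = |H| |K|`, so the join of a Sylow `p`-subgroup with any of its conjugates
is again a `p`-group. If `G` is not nilpotent, some `n_p ≥ p + 1` Sylow `p`-subgroups therefore lie
outside `CD(G)`; `δ_CD(G) < 4` forces `p = 2`, `n_2 = 3`, and every other subgroup lies in `CD(G)`.

In particular `1 ∈ CD(G)`, so the maximal measure is `|G|`, `Z(G) = 1` and `C(C(H)) = H` for all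
`H ∈ CD(G)`. If an involution `t` had `⟨t⟩ ∈ CD(G)`, then `C(t)` would have index `2`, making
`⟨t⟩ = C(C(t))` normal and hence central; so each `⟨t⟩` is a Sylow `2`-subgroup, of order `2`.
Finally a nontrivial subgroup `R` of odd order lies in `CD(G)`, so `|C(R)| = |G| / |R|` is even;
an involution `u ∈ C(R)` has `R ≤ C(u)`, so `C(u)` is not a Sylow `2`-subgroup, hence lies in
`CD(G)`, and then `4` divides `|C(u)| |C(C(u))| = |G|`, which is absurd. Such an `R` exists since
`[G : P]` is odd and greater than `1`.
-/

/-- The Chermak–Delgado measure of a subgroup. -/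
noncomputable def cdMeasure {G : Type*} [Group G] (H : Subgroup G) : ℕ :=
  Nat.card H * Nat.card (Subgroup.centralizer (H : Set G))

open Subgroup
open scoped Pointwise

section ChermakDelgado

variable {G : Type*} [Group G]

theorem Subgroup.card_mul_mul_card_inf (H K : Subgroup G) :
    Nat.card (H * K : Set G) * Nat.card (H ⊓ K : Subgroup G) = Nat.card H * Nat.card K := by
  have hstab : MulAction.stabilizer H ((1 : G) : G ⧸ K) = K.subgroupOf H := by
    ext h
    simp [mem_subgroupOf, MulAction.mem_stabilizer_iff, MulAction.compHom_smul_def,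
      QuotientGroup.eq]
  have horbit : ((↑) '' (H : Set G) : Set (G ⧸ K)) = MulAction.orbit H ((1 : G) : G ⧸ K) := by
    ext x
    simp [MulAction.mem_orbit_iff, MulAction.compHom_smul_def]
  have hrel : Nat.card (H ⊓ K : Subgroup G) * K.relIndex H = Nat.card H := by
    rw [← relIndex_bot_left, ← relIndex_bot_left, ← inf_relIndex_left H K,
      relIndex_mul_relIndex _ _ _ bot_le inf_le_left]
  rw [card_mul_eq_card_subgroup_mul_card_quotient, horbit, Nat.card_coe_set_eq,
    ← MulAction.index_stabilizer, hstab, ← relIndex, mul_right_comm, mul_assoc, hrel, mul_comm]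

theorem Subgroup.centralizer_bot : centralizer ((⊥ : Subgroup G) : Set G) = ⊤ :=
  centralizer_eq_top_iff_subset.mpr (by simp)

theorem mem_center_of_orderOf_eq_two {t : G} (ht : orderOf t = 2) (hN : (zpowers t).Normal) :
    t ∈ center G := by
  refine mem_center_iff.mpr fun g => ?_
  obtain ⟨n, hn⟩ := mem_zpowers_iff.mp (hN.conj_mem t (mem_zpowers t) g)
  rw [← zpow_mod_orderOf, ht, Nat.cast_ofNat] at hn
  rcases Int.emod_two_eq_zero_or_one n with h | h <;> rw [h] at hn
  · simp only [zpow_zero, eq_comm, conj_eq_one_iff] at hn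
    simp [hn] at ht
  · rwa [zpow_one, eq_comm, mul_inv_eq_iff_eq_mul] at hn

theorem Sylow.normal_iff_card_eq_one {p : ℕ} [Fact p.Prime] [Finite (Sylow p G)]
    (P : Sylow p G) : (P : Subgroup G).Normal ↔ Nat.card (Sylow p G) = 1 := by
  refine ⟨fun h => ?_, fun h => ?_⟩
  · have := Sylow.unique_of_normal P h
    exact Nat.card_unique
  · have := (Nat.card_eq_one_iff_unique.mp h).1
    exact Sylow.normal_of_subsingleton P

theorem Sylow.add_one_le_card_of_card_ne_one {p : ℕ} [Fact p.Prime] [Finite (Sylow p G)]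
    (h : Nat.card (Sylow p G) ≠ 1) : p + 1 ≤ Nat.card (Sylow p G) := by
  have hpos : 1 ≤ Nat.card (Sylow p G) := Nat.card_pos
  have hdvd := (Nat.modEq_iff_dvd' hpos).mp (card_sylow_modEq_one p G).symm
  have := Nat.le_of_dvd (by omega) hdvd
  omega

def IsCDSubgroup (H : Subgroup G) : Prop :=
  ∀ K : Subgroup G, cdMeasure K ≤ cdMeasure H

theorem cdMeasure_bot : cdMeasure (⊥ : Subgroup G) = Nat.card G := by
  rw [cdMeasure, card_bot, one_mul, centralizer_bot, card_top]

theorem cdMeasure_le_cdMeasure_map {G' : Type*} [Group G'] [Finite G'] {f : G →* G'}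
    (hf : Function.Injective f) (H : Subgroup G) : cdMeasure H ≤ cdMeasure (H.map f) := by
  rw [cdMeasure, cdMeasure, card_map_of_injective hf,
    ← card_map_of_injective (K := centralizer (H : Set G)) hf]
  gcongr
  exact card_le_of_le (by simpa using map_centralizer_le_centralizer_image (H : Set G) f)

theorem IsCDSubgroup.card_mul_card_centralizer {H : Subgroup G}
    (hbot : IsCDSubgroup (⊥ : Subgroup G)) (hH : IsCDSubgroup H) :
    Nat.card H * Nat.card (centralizer (H : Set G)) = Nat.card G :=
  (le_antisymm (hbot H) (hH ⊥)).trans cdMeasure_bot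

theorem IsCDSubgroup.four_dvd_card_of_centralizer_zpowers
    (hbot : IsCDSubgroup (⊥ : Subgroup G)) {u : G} (hu : orderOf u = 2)
    (hC : IsCDSubgroup (centralizer (zpowers u : Set G))) : 4 ∣ Nat.card G := by
  have hmem : u ∈ centralizer (zpowers u : Set G) := le_centralizer (zpowers u) (mem_zpowers u)
  have hmem' : u ∈ centralizer (centralizer (zpowers u : Set G) : Set G) :=
    le_centralizer_iff.mpr le_rfl (mem_zpowers u)
  rw [← hbot.card_mul_card_centralizer hC]
  exact mul_dvd_mul (hu ▸ orderOf_dvd_natCard _ hmem) (hu ▸ orderOf_dvd_natCard _ hmem')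

section Finite

variable [Finite G]

theorem cdMeasure_pos (H : Subgroup G) : 0 < cdMeasure H :=
  Nat.mul_pos Nat.card_pos Nat.card_pos

theorem card_centralizer_mul_card_centralizer_le (H K : Subgroup G) :
    Nat.card (centralizer (H : Set G)) * Nat.card (centralizer (K : Set G)) ≤
      Nat.card (centralizer ((H ⊓ K : Subgroup G) : Set G)) *
        Nat.card (centralizer ((H ⊔ K : Subgroup G) : Set G)) := by
  rw [← card_mul_mul_card_inf]
  gcongr
  · exact Nat.card_mono (Set.toFinite _) <| Set.mul_subset_iff.mpr fun a ha b hb =>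
      mul_mem (centralizer_le (by simp) ha) (centralizer_le (by simp) hb)
  · apply card_le_of_le
    rw [le_centralizer_iff, sup_le_iff]
    exact ⟨le_centralizer_iff.mpr inf_le_left, le_centralizer_iff.mpr inf_le_right⟩

namespace IsCDSubgroup

variable {H K : Subgroup G}

theorem smul (hH : IsCDSubgroup H) (φ : MulAut G) : IsCDSubgroup (φ • H) := fun K =>
  (hH K).trans (cdMeasure_le_cdMeasure_map φ.injective H)

theorem centralizer_centralizer (hH : IsCDSubgroup H) :
    Subgroup.centralizer (Subgroup.centralizer (H : Set G) : Set G) = H := by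
  refine (eq_of_le_of_card_ge (le_centralizer_iff.mpr le_rfl) ?_).symm
  have h := hH (Subgroup.centralizer (H : Set G))
  rw [cdMeasure, cdMeasure, mul_comm (Nat.card H)] at h
  exact Nat.le_of_mul_le_mul_left h Nat.card_pos

theorem center_eq_bot (hbot : IsCDSubgroup (⊥ : Subgroup G)) : center G = ⊥ := by
  rw [← centralizer_univ, ← coe_top, ← centralizer_bot, hbot.centralizer_centralizer]

theorem card_sup_mul_card_inf (hH : IsCDSubgroup H) (hK : IsCDSubgroup K) :
    Nat.card (H ⊔ K : Subgroup G) * Nat.card (H ⊓ K : Subgroup G) = Nat.card H * Nat.card K := by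
  set c := Nat.card (Subgroup.centralizer ((H ⊔ K : Subgroup G) : Set G))
  have hHK : cdMeasure H * cdMeasure H ≤ Nat.card (H * K : Set G) * c * cdMeasure H := calc
    cdMeasure H * cdMeasure H = cdMeasure H * cdMeasure K := by rw [le_antisymm (hH K) (hK H)]
    _ = Nat.card (H * K : Set G) * Nat.card (H ⊓ K : Subgroup G) *
          (Nat.card (Subgroup.centralizer (H : Set G)) *
            Nat.card (Subgroup.centralizer (K : Set G))) := by
      rw [card_mul_mul_card_inf, cdMeasure, cdMeasure]; ring
    _ ≤ Nat.card (H * K : Set G) * Nat.card (H ⊓ K : Subgroup G) *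
          (Nat.card (Subgroup.centralizer ((H ⊓ K : Subgroup G) : Set G)) * c) :=
      Nat.mul_le_mul_left _ (card_centralizer_mul_card_centralizer_le H K)
    _ = Nat.card (H * K : Set G) * c * cdMeasure (H ⊓ K) := by rw [cdMeasure]; ring
    _ ≤ Nat.card (H * K : Set G) * c * cdMeasure H := Nat.mul_le_mul_left _ (hH _)
  have hsup : Nat.card (H ⊔ K : Subgroup G) * c ≤ Nat.card (H * K : Set G) * c :=
    (hH _).trans (Nat.le_of_mul_le_mul_right hHK (cdMeasure_pos H))
  have hmul : Nat.card (H * K : Set G) ≤ Nat.card (H ⊔ K : Subgroup G) :=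
    Nat.card_mono (Set.toFinite _) <| Set.mul_subset_iff.mpr fun _ ha _ hb =>
      mul_mem (mem_sup_left ha) (mem_sup_right hb)
  rw [le_antisymm (Nat.le_of_mul_le_mul_right hsup Nat.card_pos) hmul, card_mul_mul_card_inf]

theorem isPGroup_sup {p : ℕ} [Fact p.Prime] (hH : IsCDSubgroup H) (hK : IsCDSubgroup K)
    (hpH : IsPGroup p H) (hpK : IsPGroup p K) : IsPGroup p (H ⊔ K : Subgroup G) := by
  obtain ⟨a, ha⟩ := IsPGroup.iff_card.mp hpH
  obtain ⟨b, hb⟩ := IsPGroup.iff_card.mp hpK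
  have hdvd : Nat.card (H ⊔ K : Subgroup G) ∣ p ^ (a + b) :=
    ⟨_, by rw [pow_add, ← ha, ← hb, ← hH.card_sup_mul_card_inf hK]⟩
  obtain ⟨c, -, hc⟩ := (Nat.dvd_prime_pow Fact.out).mp hdvd
  exact IsPGroup.of_card hc

theorem normal_of_sylow {p : ℕ} [Fact p.Prime] {P : Sylow p G}
    (hP : IsCDSubgroup (P : Subgroup G)) : (P : Subgroup G).Normal := by
  rw [← normalizer_eq_top_iff, eq_top_iff]
  intro g _
  refine Sylow.smul_eq_iff_mem_normalizer.mp ?_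
  have hgP : IsCDSubgroup ((g • P : Sylow p G) : Subgroup G) := hP.smul (MulAut.conj g)
  have hsup := hP.isPGroup_sup hgP P.isPGroup' (g • P).isPGroup'
  exact Sylow.ext (((g • P).3 hsup le_sup_right).symm.trans (P.3 hsup le_sup_left))

theorem not_zpowers_of_orderOf_eq_two (hbot : IsCDSubgroup (⊥ : Subgroup G)) {t : G}
    (ht : orderOf t = 2) : ¬ IsCDSubgroup (zpowers t) := by
  intro hT
  have hindex : (Subgroup.centralizer (zpowers t : Set G)).index = 2 := by
    have hG := hbot.card_mul_card_centralizer hT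
    rw [Nat.card_zpowers, ht, ← card_mul_index (Subgroup.centralizer (zpowers t : Set G)),
      mul_comm 2] at hG
    exact Nat.eq_of_mul_eq_mul_left Nat.card_pos hG.symm
  have hnormal : (zpowers t).Normal := by
    have := normal_of_index_eq_two hindex
    rw [← hT.centralizer_centralizer]
    infer_instance
  have h1 := mem_center_of_orderOf_eq_two ht hnormal
  rw [hbot.center_eq_bot, mem_bot] at h1
  simp [h1] at ht

theorem exists_orderOf_eq_two_le_centralizer_not_isCD (hbot : IsCDSubgroup (⊥ : Subgroup G))
    (h2 : 2 ∣ Nat.card G) (h4 : ¬ 4 ∣ Nat.card G) (hH : IsCDSubgroup H)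
    (hodd : ¬ 2 ∣ Nat.card H) :
    ∃ u : G, orderOf u = 2 ∧ H ≤ Subgroup.centralizer (zpowers u : Set G) ∧
      ¬ IsCDSubgroup (Subgroup.centralizer (zpowers u : Set G)) := by
  rw [← hbot.card_mul_card_centralizer hH] at h2
  obtain ⟨⟨u, hu⟩, hu2⟩ := exists_prime_orderOf_dvd_card' 2
    ((Nat.prime_two.dvd_mul.mp h2).resolve_left hodd)
  rw [orderOf_mk] at hu2
  exact ⟨u, hu2, le_centralizer_iff.mp (zpowers_le.mpr hu), fun hC =>
    h4 (hbot.four_dvd_card_of_centralizer_zpowers hu2 hC)⟩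

theorem card_sylow_two_eq_two (hbot : IsCDSubgroup (⊥ : Subgroup G))
    (hCD : {H : Subgroup G | ¬ IsCDSubgroup H} ⊆ Set.range ((↑) : Sylow 2 G → Subgroup G))
    (h2 : 2 ∣ Nat.card G) (P : Sylow 2 G) : Nat.card P = 2 := by
  obtain ⟨t, ht⟩ := exists_prime_orderOf_dvd_card' 2 h2
  obtain ⟨Q, hQ⟩ := hCD (hbot.not_zpowers_of_orderOf_eq_two ht)
  rw [P.card_eq_multiplicity, ← Q.card_eq_multiplicity, hQ, Nat.card_zpowers, ht]

theorem eq_bot_of_odd_card (hbot : IsCDSubgroup (⊥ : Subgroup G))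
    (hCD : {H : Subgroup G | ¬ IsCDSubgroup H} ⊆ Set.range ((↑) : Sylow 2 G → Subgroup G))
    (hsylow : ∀ Q : Sylow 2 G, Nat.card Q = 2) (hodd : ¬ 2 ∣ Nat.card H) : H = ⊥ := by
  obtain ⟨Q⟩ := (inferInstance : Nonempty (Sylow 2 G))
  have h2 : 2 ∣ Nat.card G := hsylow Q ▸ card_subgroup_dvd_card (Q : Subgroup G)
  have h4 : ¬ 4 ∣ Nat.card G := fun h4 => by
    have := Q.pow_dvd_card_of_pow_dvd_card (n := 2) h4
    rw [hsylow Q] at this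
    norm_num at this
  have hH : IsCDSubgroup H := by
    by_contra hH
    obtain ⟨Q', rfl⟩ := hCD hH
    exact hodd (hsylow Q').symm.dvd
  obtain ⟨u, -, hHu, hCu⟩ := hbot.exists_orderOf_eq_two_le_centralizer_not_isCD h2 h4 hH hodd
  obtain ⟨Q', hQ'⟩ := hCD hCu
  have hH2 : Nat.card H ∣ 2 := hsylow Q' ▸ card_dvd_of_le (hQ' ▸ hHu)
  rcases (Nat.dvd_prime Nat.prime_two).mp hH2 with hH1 | hH2
  · exact eq_bot_of_card_eq H hH1
  · exact absurd hH2.symm.dvd hodd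

end IsCDSubgroup

theorem card_sylow_two_eq_one_of_not_isCD_subset_sylow
    (hCD : {H : Subgroup G | ¬ IsCDSubgroup H} ⊆ Set.range ((↑) : Sylow 2 G → Subgroup G)) :
    Nat.card (Sylow 2 G) = 1 := by
  by_contra hn
  have hnormal (Q : Sylow 2 G) : ¬ (Q : Subgroup G).Normal :=
    fun h => hn (Q.normal_iff_card_eq_one.mp h)
  have hbot : IsCDSubgroup (⊥ : Subgroup G) := by
    by_contra h
    obtain ⟨Q, hQ⟩ := hCD h
    exact hnormal Q (hQ ▸ normal_bot)
  obtain ⟨P⟩ := (inferInstance : Nonempty (Sylow 2 G))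
  have h2 : 2 ∣ Nat.card G := by
    rcases P.isPGroup'.card_eq_or_dvd with h1 | h2
    · exact absurd (eq_bot_of_card_eq _ h1 ▸ normal_bot) (hnormal P)
    · exact h2.trans (card_subgroup_dvd_card _)
  have hsylow := hbot.card_sylow_two_eq_two hCD h2
  have hcop : Nat.Coprime 2 (P : Subgroup G).index := by
    have := P.card_coprime_index
    rwa [hsylow P] at this
  have hindex : (P : Subgroup G).index ≠ 1 := fun h => hnormal P (index_eq_one.mp h ▸ normal_top)
  obtain ⟨q, hq, hqP⟩ := Nat.exists_prime_and_dvd hindex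
  have : Fact q.Prime := ⟨hq⟩
  obtain ⟨x, hx⟩ := exists_prime_orderOf_dvd_card' q (hqP.trans (index_dvd_card _))
  have hodd : ¬ 2 ∣ Nat.card (zpowers x) := by
    rw [Nat.card_zpowers, hx]
    intro h
    have := (hcop.coprime_dvd_right hqP).eq_one_of_dvd h
    omega
  have hx1 := hbot.eq_bot_of_odd_card hCD hsylow hodd
  rw [zpowers_eq_bot] at hx1
  rw [hx1, orderOf_one] at hx
  exact hq.ne_one hx.symm

end Finite

end ChermakDelgado

theorem nilpotent_of_delta_cd_lt_four
    (G : Type*) [Group G] [Finite G]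
    (h : Nat.card {H : Subgroup G //
      ¬ ∀ K : Subgroup G, cdMeasure K ≤ cdMeasure H} < 4) :
    Group.IsNilpotent G := by
  refine (Group.isNilpotent_of_finite_tfae.out 0 3).mpr ?_
  intro p _ P
  by_contra hP
  have hn : Nat.card (Sylow p G) ≠ 1 := fun h1 => hP (P.normal_iff_card_eq_one.mpr h1)
  let sylows : Set (Subgroup G) := Set.range ((↑) : Sylow p G → Subgroup G)
  let nonCD : Set (Subgroup G) := {H | ¬ IsCDSubgroup H}
  have hsub : sylows ⊆ nonCD := by
    rintro _ ⟨Q, rfl⟩ hQ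
    exact hn (Q.normal_iff_card_eq_one.mp hQ.normal_of_sylow)
  have hsylows : sylows.ncard = Nat.card (Sylow p G) :=
    Set.ncard_range_of_injective fun _ _ => Sylow.ext
  have hnonCD : nonCD.ncard < 4 := by rwa [← Nat.card_coe_set_eq]
  have hp := Sylow.add_one_le_card_of_card_ne_one hn
  have hle := Set.ncard_le_ncard hsub
  obtain rfl : p = 2 := by have := (Fact.out : p.Prime).two_le; omega
  have heq : sylows = nonCD := Set.eq_of_subset_of_ncard_le hsub (by omega)
  exact hn (card_sylow_two_eq_one_of_not_isCD_subset_sylow heq.superset)
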